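/- arXiv:1312.4022 — 6 statements merged into one kernel-verified Lean document; each statement's English description precedes it below -/
import Mathlib

section
/- If R is a central linear Armendariz ring, then R is abelian, i.e., every idempotent element of R lies in the center of R. -/
open Polynomial

/-- A ring `R` is *central linear Armendariz* if whenever the product of two linear
polynomials `(a₀ + a₁x)(b₀ + b₁x) = 0` in `R[x]`, each product `aᵢbⱼ` is central in `R`. -/
def CentralLinearArmendariz (R : Type*) [Ring R] : Prop :=
  ∀ a₀ a₁ b₀ b₁ : R,
    (C a₀ + C a₁ * X) * (C b₀ + C b₁ * X) = 0 →
      a₀ * b₀ ∈ Set.center R ∧ a₀ * b₁ ∈ Set.center R ∧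
      a₁ * b₀ ∈ Set.center R ∧ a₁ * b₁ ∈ Set.center R

/-! For an idempotent `e` and any `r`, the element `u = e r (1 - e)` satisfies
`(e + u x)(1 - e - u x) = 0`, so `u = u (1 - e)` is central and hence
`u = (1 - e) u = 0`. Applied to `e` and to `1 - e` this gives `e r = e r e = r e`. -/

theorem Polynomial.linear_mul_linear {R : Type*} [Ring R] (a₀ a₁ b₀ b₁ : R) :
    (C a₀ + C a₁ * X) * (C b₀ + C b₁ * X) =
      C (a₀ * b₀) + C (a₀ * b₁ + a₁ * b₀) * X + C (a₁ * b₁) * X ^ 2 := by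
  simp only [add_mul, mul_add, C_mul, C_add, sq, mul_assoc, X_mul_C, ← mul_assoc X]
  abel

theorem CentralLinearArmendariz.mul_mul_one_sub_eq_zero {R : Type*} [Ring R]
    (h : CentralLinearArmendariz R) {e : R} (he : IsIdempotentElem e) (r : R) :
    e * r * (1 - e) = 0 := by
  set u := e * r * (1 - e)
  have heu : e * u = u := by simp only [u, ← mul_assoc, he.eq]
  have hue : u * (1 - e) = u := by simp only [u, mul_assoc, he.one_sub.eq]
  have hfu : (1 - e) * u = 0 := by simp only [u, ← mul_assoc, he.one_sub_mul_self, zero_mul]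
  clear_value u
  have huu : u * u = 0 := by rw [← mul_zero u, ← hfu, ← mul_assoc, hue]
  have hprod : (C e + C u * X) * (C (1 - e) + C (-u) * X) = 0 := by
    rw [linear_mul_linear, he.mul_one_sub_self, mul_neg, heu, hue, neg_add_cancel, mul_neg, huu]
    simp
  obtain ⟨-, -, hcentral, -⟩ := h _ _ _ _ hprod
  rw [hue] at hcentral
  calc u = u * (1 - e) := hue.symm
    _ = (1 - e) * u := (Semigroup.mem_center_iff.mp hcentral (1 - e)).symm
    _ = 0 := hfu

/-- If `R` is a central linear Armendariz ring, then `R` is abelian, i.e. every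
idempotent of `R` is central. -/
theorem stmt_0 (R : Type*) [Ring R] (h : CentralLinearArmendariz R) :
    ∀ e : R, IsIdempotentElem e → e ∈ Set.center R := by
  intro e he
  refine Semigroup.mem_center_iff.mpr fun r => ?_
  have hleft : e * r * (1 - e) = 0 := h.mul_mul_one_sub_eq_zero he r
  have hright : (1 - e) * r * (1 - (1 - e)) = 0 := h.mul_mul_one_sub_eq_zero he.one_sub r
  rw [mul_one_sub, sub_eq_zero] at hleft
  rw [sub_sub_cancel, one_sub_mul, sub_mul, sub_eq_zero] at hright
  rw [hright, ← hleft]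
end

section
/- Let R be a ring and e a central idempotent of R. Then R is central linear Armendariz if and only if both eR and (1−e)R (which are rings with identities e and 1−e respectively) are central linear Armendariz. -/
open Polynomial

/-- A ring `R` is *linear Armendariz* if whenever the product of two linear
polynomials `(a₀ + a₁x)(b₀ + b₁x) = 0` in `R[x]`, each product `aᵢbⱼ` is zero. -/
def LinearArmendariz (R : Type*) [Ring R] : Prop :=
  ∀ a₀ a₁ b₀ b₁ : R,
    (C a₀ + C a₁ * X) * (C b₀ + C b₁ * X) = 0 →
      a₀ * b₀ = 0 ∧ a₀ * b₁ = 0 ∧ a₁ * b₀ = 0 ∧ a₁ * b₁ = 0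

/-- A ring `R` is *Armendariz* if whenever `f g : R[x]` satisfy `f * g = 0`,
every product of a coefficient of `f` with a coefficient of `g` is zero. -/
def Armendariz (R : Type*) [Ring R] : Prop :=
  ∀ f g : R[X], f * g = 0 → ∀ i j : ℕ, f.coeff i * g.coeff j = 0

/-- For `e : R`, the set `eR = {x : R | e * x = x}` as a non-unital subring of `R`
(when `e` is a central idempotent this set is exactly `eR`). -/
def cornerSubring {R : Type*} [Ring R] (e : R) : NonUnitalSubring R where
  carrier := {x | e * x = x}
  zero_mem' := mul_zero e
  add_mem' := fun {a b} ha hb => by simp only [Set.mem_setOf_eq] at *; rw [mul_add, ha, hb]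
  neg_mem' := fun {a} ha => by simp only [Set.mem_setOf_eq] at *; rw [mul_neg, ha]
  mul_mem' := fun {a b} ha hb => by
    simp only [Set.mem_setOf_eq] at *; rw [← mul_assoc, ha]

/-- For a central idempotent `e`, the set `eR` is a ring with identity `e`. -/
def cornerRing {R : Type*} [Ring R] (e : R) (he : IsIdempotentElem e)
    (hc : e ∈ Set.center R) : Ring (cornerSubring e) where
  __ := (inferInstance : NonUnitalRing (cornerSubring e))
  one := ⟨e, he⟩
  one_mul x := Subtype.ext x.2
  mul_one x := Subtype.ext (by
    have hx : e * (x : R) = x := x.2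
    have : (x : R) * e = e * (x : R) := (Set.mem_center_iff.mp hc).comm x |>.symm
    show (x : R) * e = x
    rw [this, hx])

/-! Central linear Armendariz only asks that `a₀ * b₁` be central whenever
`a₀ * b₀ = a₀ * b₁ + a₁ * b₀ = a₁ * b₁ = 0`: the other three products are then `0`, `0` and
`-(a₀ * b₁)`. In this form the property descends along injective non-unital ring homomorphisms
and passes to products. Now `eR` embeds in `R`, and `R` embeds in `eR × (1 - e)R` by
`x ↦ (e * x, (1 - e) * x)`; both maps are multiplicative because `e` is a central idempotent. -/

theorem linear_mul_linear_eq_zero_iff {R : Type*} [Ring R] (a₀ a₁ b₀ b₁ : R) :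
    (C a₀ + C a₁ * X) * (C b₀ + C b₁ * X) = 0 ↔
      a₀ * b₀ = 0 ∧ a₀ * b₁ + a₁ * b₀ = 0 ∧ a₁ * b₁ = 0 := by
  have expand : (C a₀ + C a₁ * X) * (C b₀ + C b₁ * X)
      = C (a₀ * b₀) + C (a₀ * b₁ + a₁ * b₀) * X + C (a₁ * b₁) * X ^ 2 := by
    simp only [add_mul, mul_add, C_add, C_mul, mul_assoc, X_mul, pow_two]
    abel
  rw [expand, Polynomial.ext_iff]
  constructor
  · intro h
    refine ⟨by simpa using h 0, by simpa [mul_assoc, coeff_C_mul] using h 1,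
      by simpa [mul_assoc, coeff_C_mul] using h 2⟩
  · rintro ⟨h₀, h₁, h₂⟩ n
    simp [h₀, h₁, h₂]

theorem centralLinearArmendariz_iff (R : Type*) [Ring R] :
    CentralLinearArmendariz R ↔ ∀ a₀ a₁ b₀ b₁ : R,
      a₀ * b₀ = 0 → a₀ * b₁ + a₁ * b₀ = 0 → a₁ * b₁ = 0 → a₀ * b₁ ∈ Set.center R := by
  simp only [CentralLinearArmendariz, linear_mul_linear_eq_zero_iff]
  refine ⟨fun h a₀ a₁ b₀ b₁ h₀ h₁ h₂ => (h a₀ a₁ b₀ b₁ ⟨h₀, h₁, h₂⟩).2.1, ?_⟩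
  rintro h a₀ a₁ b₀ b₁ ⟨h₀, h₁, h₂⟩
  have hc := h a₀ a₁ b₀ b₁ h₀ h₁ h₂
  rw [h₀, h₂, eq_neg_of_add_eq_zero_right h₁]
  exact ⟨Set.zero_mem_center, hc, Set.neg_mem_center hc, Set.zero_mem_center⟩

namespace CentralLinearArmendariz

variable {R S T : Type*} [Ring R] [Ring S] [Ring T]

theorem of_injective (f : R →ₙ+* S) (hf : Function.Injective f)
    (hS : CentralLinearArmendariz S) : CentralLinearArmendariz R := by
  rw [centralLinearArmendariz_iff] at hS ⊢
  intro a₀ a₁ b₀ b₁ h₀ h₁ h₂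
  have hc := hS (f a₀) (f a₁) (f b₀) (f b₁) (by rw [← map_mul, h₀, map_zero])
    (by rw [← map_mul, ← map_mul, ← map_add, h₁, map_zero]) (by rw [← map_mul, h₂, map_zero])
  rw [← map_mul] at hc
  refine Semigroup.mem_center_iff.mpr fun g => hf ?_
  rw [map_mul, Semigroup.mem_center_iff.mp hc, ← map_mul]

theorem prod (hS : CentralLinearArmendariz S) (hT : CentralLinearArmendariz T) :
    CentralLinearArmendariz (S × T) := by
  rw [centralLinearArmendariz_iff] at hS hT ⊢
  intro a₀ a₁ b₀ b₁ h₀ h₁ h₂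
  rw [Set.center_prod]
  exact ⟨hS _ _ _ _ (congrArg Prod.fst h₀) (congrArg Prod.fst h₁) (congrArg Prod.fst h₂),
    hT _ _ _ _ (congrArg Prod.snd h₀) (congrArg Prod.snd h₁) (congrArg Prod.snd h₂)⟩

end CentralLinearArmendariz

section Corner

variable {R : Type*} [Ring R] {e : R}

theorem one_sub_mem_center (hc : e ∈ Set.center R) : 1 - e ∈ Set.center R :=
  (Subring.center R).sub_mem (Subring.center R).one_mem hc

def cornerProj (he : IsIdempotentElem e) (hc : e ∈ Set.center R) : R →ₙ+* cornerSubring e where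
  toFun x := ⟨e * x, show e * (e * x) = e * x by rw [← mul_assoc, he.eq]⟩
  map_zero' := Subtype.ext (mul_zero e)
  map_add' x y := Subtype.ext (mul_add e x y)
  map_mul' x y := Subtype.ext <| by
    show e * (x * y) = e * x * (e * y)
    rw [mul_assoc, ← mul_assoc x, Semigroup.mem_center_iff.mp hc x, mul_assoc, ← mul_assoc e e,
      he.eq]

theorem cornerProj_prod_injective (he : IsIdempotentElem e) (hc : e ∈ Set.center R) :
    Function.Injective
      ((cornerProj he hc).prod (cornerProj he.one_sub (one_sub_mem_center hc))) := by
  intro x y h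
  have h₁ : e * x = e * y := congrArg (fun p => (p.1 : R)) h
  have h₂ : (1 - e) * x = (1 - e) * y := congrArg (fun p => (p.2 : R)) h
  simpa [sub_mul, h₁] using h₂

end Corner

/-- A central idempotent `e` of `R`: `R` is central linear Armendariz iff both
`eR` and `(1-e)R` are central linear Armendariz. -/
theorem stmt_6 (R : Type*) [Ring R] (e : R) (he : IsIdempotentElem e)
    (hc : e ∈ Set.center R) :
    CentralLinearArmendariz R ↔
      (@CentralLinearArmendariz (cornerSubring e) (cornerRing e he hc) ∧
       @CentralLinearArmendariz (cornerSubring (1 - e))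
         (cornerRing (1 - e) he.one_sub
           (Semigroup.mem_center_iff.mpr (fun g => by
             have := Semigroup.mem_center_iff.mp hc g
             rw [mul_sub, sub_mul, mul_one, one_mul, this])))) := by
  let _ := cornerRing e he hc
  let _ := cornerRing (1 - e) he.one_sub (one_sub_mem_center hc)
  refine ⟨fun h => ⟨?_, ?_⟩, fun ⟨h₁, h₂⟩ => ?_⟩
  · exact h.of_injective (NonUnitalSubringClass.subtype _) Subtype.val_injective
  · exact h.of_injective (NonUnitalSubringClass.subtype _) Subtype.val_injective
  · exact (h₁.prod h₂).of_injective _ (cornerProj_prod_injective he hc)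
end

section
/- Let n ≥ 2 be a natural number and let R = T(ℤ_{2ⁿ}, ℤ_{2ⁿ}) be the trivial extension of ℤ_{2ⁿ} by itself. Then R is central linear Armendariz but R is not linear Armendariz: with a = 2^{n−1}, the polynomial f(x) = (a, 0) + (a, 1)x in R[x] satisfies f(x)² = 0, yet (a,0)·(a,1) ≠ 0. -/
open Polynomial

/-! Every commutative ring, in particular `T(ℤ_{2ⁿ}, ℤ_{2ⁿ})`, is central linear Armendariz.
If `a² = 0` and `2a = 0`, then `x = (a, 0)` and `y = (a, 1)` in `T(R, R)` satisfy `x² = 0`,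
`2xy = (0, 2a) = 0` and `y² = (0, 2a) = 0`, so `(x + yX)² = 0`, while `xy = (0, a)`.
For `a = 2ⁿ⁻¹` in `ℤ_{2ⁿ}` and `n ≥ 2` all of this holds and `a ≠ 0`. -/

theorem CentralLinearArmendariz.of_commRing (R : Type*) [CommRing R] :
    CentralLinearArmendariz R := by
  intro _ _ _ _ _
  simp only [Set.center_eq_univ, Set.mem_univ, and_self]

theorem not_linearArmendariz_of_sq_eq_zero {R : Type*} [Ring R] {a b : R}
    (hsq : (C a + C b * X) ^ 2 = 0) (hab : a * b ≠ 0) : ¬ LinearArmendariz R :=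
  fun h => hab (h a b a b (by rwa [← sq])).2.1

theorem Polynomial.linear_sq_eq_zero {R : Type*} [CommRing R] {a b : R}
    (ha : a ^ 2 = 0) (hab : 2 * a * b = 0) (hb : b ^ 2 = 0) : (C a + C b * X) ^ 2 = 0 := by
  have expand : (C a + C b * X) ^ 2 = C (a ^ 2) + C (2 * a * b) * X + C (b ^ 2) * X ^ 2 := by
    simp only [C_mul, C_pow, C_ofNat]; ring
  rw [expand, ha, hab, hb]
  simp

theorem ZMod.natCast_pow_eq_zero_iff {p : ℕ} (hp : 1 < p) (n k : ℕ) :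
    (p : ZMod (p ^ n)) ^ k = 0 ↔ n ≤ k := by
  rw [← Nat.cast_pow, ZMod.natCast_eq_zero_iff, Nat.pow_dvd_pow_iff_le_right hp]

namespace TrivSqZeroExt

variable {R : Type*} [CommRing R] {a : R}

theorem inl_mul_inl_add_inr_one (ha : a * a = 0) :
    (inl a : TrivSqZeroExt R R) * (inl a + inr 1) = inr a := by
  ext <;> simp [ha]

theorem sq_inl_add_inl_add_inr_one_mul_X_eq_zero (ha : a * a = 0) (h2a : 2 * a = 0) :
    (C (inl a : TrivSqZeroExt R R) + C (inl a + inr 1) * X) ^ 2 = 0 := by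
  apply linear_sq_eq_zero
  · rw [sq, ← inl_mul, ha, inl_zero]
  · rw [mul_assoc, inl_mul_inl_add_inr_one ha, two_mul, ← inr_add, ← two_mul, h2a, inr_zero]
  · ext <;> simp [sq, ha, ← two_mul, h2a]

end TrivSqZeroExt

open TrivSqZeroExt in
/-- For `n ≥ 2`, the trivial extension `R = T(ℤ_{2ⁿ}, ℤ_{2ⁿ})` is central linear
Armendariz but not linear Armendariz: with `a = 2^(n-1)`, the linear polynomial
`f(x) = (a,0) + (a,1)x` satisfies `f(x)² = 0` while `(a,0)·(a,1) ≠ 0`. -/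
theorem stmt_8 (n : ℕ) (hn : 2 ≤ n) :
    CentralLinearArmendariz (TrivSqZeroExt (ZMod (2 ^ n)) (ZMod (2 ^ n))) ∧
    ¬ LinearArmendariz (TrivSqZeroExt (ZMod (2 ^ n)) (ZMod (2 ^ n))) ∧
    (letI a : ZMod (2 ^ n) := (2 : ZMod (2 ^ n)) ^ (n - 1)
     (C (inl a : TrivSqZeroExt (ZMod (2 ^ n)) (ZMod (2 ^ n))) +
        C (inl a + inr 1) * X) ^ 2 = 0 ∧
     (inl a : TrivSqZeroExt (ZMod (2 ^ n)) (ZMod (2 ^ n))) * (inl a + inr 1) ≠ 0) := by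
  have h2pow := ZMod.natCast_pow_eq_zero_iff one_lt_two n
  push_cast at h2pow
  set a : ZMod (2 ^ n) := 2 ^ (n - 1)
  have ha : a * a = 0 := by rw [← pow_add, h2pow]; omega
  have h2a : 2 * a = 0 := by rw [← pow_succ', h2pow]; omega
  have ha0 : a ≠ 0 := by rw [Ne, h2pow]; omega
  have hsq := sq_inl_add_inl_add_inr_one_mul_X_eq_zero ha h2a
  have hne : (inl a : TrivSqZeroExt (ZMod (2 ^ n)) (ZMod (2 ^ n))) * (inl a + inr 1) ≠ 0 := by
    rw [inl_mul_inl_add_inr_one ha, Ne, ← inr_zero]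
    exact inr_injective.ne ha0
  exact ⟨.of_commRing _, not_linearArmendariz_of_sq_eq_zero hsq hne, hsq, hne⟩
end

section
/- If R is a central reduced ring, then R is central linear Armendariz. -/
open Polynomial

section CentralReduced

variable {R : Type*} [Ring R]

theorem linear_mul_linear_eq_zero {a₀ a₁ b₀ b₁ : R}
    (h : (C a₀ + C a₁ * X) * (C b₀ + C b₁ * X) = 0) :
    a₀ * b₀ = 0 ∧ a₁ * b₀ + a₀ * b₁ = 0 ∧ a₁ * b₁ = 0 := by
  have coeff_eq_zero (n : ℕ) := congrArg (coeff · n) h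
  refine ⟨?_, ?_, ?_⟩
  · simpa [mul_add, add_mul, mul_assoc] using coeff_eq_zero 0
  · simpa [mul_add, add_mul, mul_assoc] using coeff_eq_zero 1
  · simpa [mul_add, add_mul, mul_assoc, coeff_X_pow, ← sq] using coeff_eq_zero 2

theorem mul_sq_eq_zero_of_mul_eq_zero {a b : R} (h : a * b = 0) : (b * a) ^ 2 = 0 := by
  rw [sq, mul_assoc, ← mul_assoc a, h, zero_mul, mul_zero]

theorem mul_mem_center_of_mul_eq_zero (hR : ∀ a : R, IsNilpotent a → a ∈ Set.center R)
    {a b : R} (h : a * b = 0) : b * a ∈ Set.center R :=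
  hR _ ⟨2, mul_sq_eq_zero_of_mul_eq_zero h⟩

end CentralReduced

/-- A central reduced ring (every nilpotent element is central) is central linear
Armendariz. -/
theorem stmt_16 (R : Type*) [Ring R]
    (h : ∀ a : R, IsNilpotent a → a ∈ Set.center R) :
    CentralLinearArmendariz R := by
  intro a₀ a₁ b₀ b₁ hprod
  obtain ⟨h₀, h₁, h₂⟩ := linear_mul_linear_eq_zero hprod
  have hba : ∀ r, r * (b₁ * a₁) = b₁ * a₁ * r :=
    Semigroup.mem_center_iff.mp (mul_mem_center_of_mul_eq_zero h h₂)
  have hb₁ : a₀ * b₁ = -(a₁ * b₀) := eq_neg_of_add_eq_zero_right h₁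
  -- `b₁ a₁` is central, so `(a₁ b₀)² = -a₀ (b₁ a₁) b₀ = -(b₁ a₁) a₀ b₀ = 0`.
  have hsq : (a₁ * b₀) ^ 2 = 0 := by
    have : a₀ * b₁ * (a₁ * b₀) = 0 := by
      rw [mul_assoc, ← mul_assoc b₁, ← mul_assoc, hba, mul_assoc, h₀, mul_zero]
    rwa [hb₁, neg_mul, neg_eq_zero, ← sq] at this
  have hc : a₁ * b₀ ∈ Set.center R := h _ ⟨2, hsq⟩
  exact ⟨h₀ ▸ Set.zero_mem_center, hb₁ ▸ Set.neg_mem_center hc, hc, h₂ ▸ Set.zero_mem_center⟩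
end

section
/- If R is a central reduced ring, then the trivial extension T(R, R) is central linear Armendariz. Conversely, if R is semiprime and T(R, R) is central linear Armendariz, then R is central reduced. -/
open Polynomial

/-! Modulo a completely semiprime ideal `I` (one with `x * x ∈ I → x ∈ I`), `x * y ∈ I` implies
`y * x ∈ I`, and `s + t ∈ I`, `t * s ∈ I` imply `t ∈ I` because `t * t = t * (s + t) - t * s`.
Reading `(A₀ + A₁ x)(B₀ + B₁ x) = 0` in `T(R, R)` componentwise and applying these two facts a few
times puts both components of `A₀ B₁` and `A₁ B₀` into `I`. In a central reduced ring the
nilpotents form such an ideal, and its elements are central, hence so are `A₀ B₁` and `A₁ B₀`.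

Conversely, write `m ε` for `inr m`. If `a * a = 0` then `(a + (a r) ε x)(a - (r a) ε x) = 0`
in `T(R, R)[x]`, so `(a r) ε · a = (a r a) ε` is central, i.e. `a r a` is central in `R`. As
`(a r a)² = 0`, this gives `(a r a) s (a r a) = 0` for all `s`, so semiprimeness yields
`a r a = 0` for all `r` and then `a = 0`. Thus `R` is reduced and its only nilpotent is `0`.
-/

section

variable {R : Type*} [Ring R]

namespace Polynomial

theorem linear_mul_linear_s17 (a₀ a₁ b₀ b₁ : R) :
    (C a₀ + C a₁ * X) * (C b₀ + C b₁ * X)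
      = C (a₀ * b₀) + C (a₀ * b₁ + a₁ * b₀) * X + C (a₁ * b₁) * X ^ 2 := by
  simp only [add_mul, mul_add, C_add, C_mul, mul_assoc, X_mul, pow_two]
  abel

theorem linear_mul_linear_eq_zero_iff {a₀ a₁ b₀ b₁ : R} :
    (C a₀ + C a₁ * X) * (C b₀ + C b₁ * X) = 0 ↔
      a₀ * b₀ = 0 ∧ a₀ * b₁ + a₁ * b₀ = 0 ∧ a₁ * b₁ = 0 := by
  rw [linear_mul_linear_s17]
  generalize a₀ * b₀ = u, a₀ * b₁ + a₁ * b₀ = v, a₁ * b₁ = w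
  constructor
  · intro h
    refine ⟨?_, ?_, ?_⟩
    · simpa using congrArg (coeff · 0) h
    · simpa using congrArg (coeff · 1) h
    · simpa using congrArg (coeff · 2) h
  · rintro ⟨rfl, rfl, rfl⟩
    simp

end Polynomial

namespace TrivSqZeroExt

theorem snd_mul_self (x y : TrivSqZeroExt R R) : (x * y).snd = x.fst * y.snd + x.snd * y.fst := by
  simp [snd_mul]

theorem mem_center_self_iff {x : TrivSqZeroExt R R} :
    x ∈ Set.center (TrivSqZeroExt R R) ↔ x.fst ∈ Set.center R ∧ x.snd ∈ Set.center R := by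
  simp only [Semigroup.mem_center_iff]
  refine ⟨fun h => ⟨fun g => ?_, fun g => ?_⟩, fun ⟨h₁, h₂⟩ g => ?_⟩
  · simpa using congrArg fst (h (inl g))
  · simpa [snd_mul_self] using congrArg snd (h (inl g))
  · ext
    · simp [h₁ g.fst]
    · simp only [snd_mul_self, h₁ g.snd, h₂ g.fst]
      exact add_comm _ _

end TrivSqZeroExt

namespace TwoSidedIdeal

def IsCompletelySemiprime (I : TwoSidedIdeal R) : Prop :=
  ∀ x, x * x ∈ I → x ∈ I

namespace IsCompletelySemiprime

variable {I : TwoSidedIdeal R}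

theorem mul_mem_swap (hI : I.IsCompletelySemiprime) {x y : R} (h : x * y ∈ I) : y * x ∈ I :=
  hI _ <| by simpa only [mul_assoc] using I.mul_mem_left y _ (I.mul_mem_right _ x h)

theorem mem_of_add_mem_of_mul_mem (hI : I.IsCompletelySemiprime) {s t : R} (h : s + t ∈ I)
    (hts : t * s ∈ I) : t ∈ I :=
  hI _ <| by
    rw [show t * t = t * (s + t) - t * s by noncomm_ring]
    exact I.sub_mem (I.mul_mem_left _ _ h) hts

theorem mul_mem_of_add_mem (hI : I.IsCompletelySemiprime) {x₀ x₁ y₀ y₁ : R} (h₁₁ : x₁ * y₁ ∈ I)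
    (h : x₀ * y₁ + x₁ * y₀ ∈ I) : x₀ * y₁ ∈ I ∧ x₁ * y₀ ∈ I := by
  have h₀₁ : x₀ * y₁ ∈ I := hI.mem_of_add_mem_of_mul_mem (by rwa [add_comm]) <| by
    simpa only [mul_assoc] using I.mul_mem_left x₀ _ (I.mul_mem_right _ y₀ (hI.mul_mem_swap h₁₁))
  exact ⟨h₀₁, by simpa using I.sub_mem h h₀₁⟩

open TrivSqZeroExt

theorem trivSqZeroExt_mul_mem (hI : I.IsCompletelySemiprime)
    {X₀ X₁ Y₀ Y₁ : TrivSqZeroExt R R}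
    (h₀ : X₀ * Y₀ = 0) (h₁ : X₀ * Y₁ + X₁ * Y₀ = 0) (h₂ : X₁ * Y₁ = 0) :
    ((X₀ * Y₁).fst ∈ I ∧ (X₀ * Y₁).snd ∈ I) ∧ ((X₁ * Y₀).fst ∈ I ∧ (X₁ * Y₀).snd ∈ I) := by
  have e₀ := congrArg fst h₀
  have e₁ := congrArg fst h₁
  have e₁' := congrArg snd h₁
  have e₂ := congrArg fst h₂
  have e₂' := congrArg snd h₂
  simp only [fst_mul, snd_mul_self, fst_add, snd_add, fst_zero, snd_zero] at e₀ e₁ e₁' e₂ e₂' ⊢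
  generalize X₀.fst = a, X₀.snd = a', X₁.fst = c, X₁.snd = c', Y₀.fst = d, Y₀.snd = d',
    Y₁.fst = b, Y₁.snd = b' at e₀ e₁ e₁' e₂ e₂' ⊢
  have sandwich : ∀ {u : R} (x y : R), u ∈ I → x * u * y ∈ I := fun x y hu =>
    I.mul_mem_right _ y (I.mul_mem_left x _ hu)
  have hcb : c * b ∈ I := e₂ ▸ I.zero_mem
  obtain ⟨hab, hcd⟩ := hI.mul_mem_of_add_mem hcb (e₁ ▸ I.zero_mem)
  obtain ⟨hc'b, hcb'⟩ := hI.mul_mem_of_add_mem hcb (by rw [add_comm, e₂']; exact I.zero_mem)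
  have hz : a' * b + c' * d ∈ I := by
    refine hI.mem_of_add_mem_of_mul_mem (s := a * b' + c * d')
      (by rw [show a * b' + c * d' + (a' * b + c' * d)
        = (a * b' + a' * b) + (c * d' + c' * d) by abel, e₁']; exact I.zero_mem) ?_
    rw [show (a' * b + c' * d) * (a * b' + c * d')
        = a' * (b * a) * b' + a' * (b * c) * d' + c' * (d * a) * b' + c' * (d * c) * d' by
      noncomm_ring]
    exact I.add_mem (I.add_mem (I.add_mem (sandwich _ _ (hI.mul_mem_swap hab))
      (sandwich _ _ (hI.mul_mem_swap hcb))) (sandwich _ _ (hI.mul_mem_swap (e₀ ▸ I.zero_mem))))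
      (sandwich _ _ (hI.mul_mem_swap hcd))
  have hm : a * b' + c * d' ∈ I := by
    rw [show a * b' + c * d' = (a * b' + a' * b) + (c * d' + c' * d) - (a' * b + c' * d) by abel,
      e₁', zero_sub]
    exact I.neg_mem hz
  obtain ⟨hab', hcd'⟩ := hI.mul_mem_of_add_mem hcb' hm
  obtain ⟨ha'b, hc'd⟩ := hI.mul_mem_of_add_mem hc'b hz
  exact ⟨⟨hab, I.add_mem hab' ha'b⟩, ⟨hcd, I.add_mem hcd' hc'd⟩⟩

theorem centralLinearArmendariz_trivSqZeroExt
    (hI : I.IsCompletelySemiprime) (hIc : ∀ x ∈ I, x ∈ Set.center R) :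
    CentralLinearArmendariz (TrivSqZeroExt R R) := by
  intro A₀ A₁ B₀ B₁ h
  obtain ⟨h₀, h₁, h₂⟩ := linear_mul_linear_eq_zero_iff.mp h
  obtain ⟨⟨h₀₁, h₀₁'⟩, ⟨h₁₀, h₁₀'⟩⟩ := hI.trivSqZeroExt_mul_mem h₀ h₁ h₂
  exact ⟨h₀ ▸ Set.zero_mem_center, mem_center_self_iff.mpr ⟨hIc _ h₀₁, hIc _ h₀₁'⟩,
    mem_center_self_iff.mpr ⟨hIc _ h₁₀, hIc _ h₁₀'⟩, h₂ ▸ Set.zero_mem_center⟩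

end IsCompletelySemiprime

end TwoSidedIdeal

open TrivSqZeroExt

def nilpotentIdealOfCentral (hR : ∀ a : R, IsNilpotent a → a ∈ Set.center R) :
    TwoSidedIdeal R :=
  .mk' {a | IsNilpotent a} .zero (fun hx hy => ((hR _ hx).comm _).isNilpotent_add hx hy)
    IsNilpotent.neg (fun hy => ((hR _ hy).comm _).symm.isNilpotent_mul_left hy)
    (fun hx => ((hR _ hx).comm _).isNilpotent_mul_right hx)

theorem mem_nilpotentIdealOfCentral {hR : ∀ a : R, IsNilpotent a → a ∈ Set.center R} {x : R} :
    x ∈ nilpotentIdealOfCentral hR ↔ IsNilpotent x :=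
  TwoSidedIdeal.mem_mk' ..

theorem isCompletelySemiprime_nilpotentIdealOfCentral
    (hR : ∀ a : R, IsNilpotent a → a ∈ Set.center R) :
    (nilpotentIdealOfCentral hR).IsCompletelySemiprime := fun x hx => by
  rw [mem_nilpotentIdealOfCentral, ← sq] at *
  exact hx.of_pow

theorem eq_zero_of_mul_self_eq_zero_of_centralLinearArmendariz
    (hsp : ∀ a : R, (∀ r : R, a * r * a = 0) → a = 0)
    (hT : CentralLinearArmendariz (TrivSqZeroExt R R)) {a : R} (ha : a * a = 0) : a = 0 := by
  refine hsp a fun r => ?_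
  have hprod : (C (inl a) + C (inr (a * r)) * X) * (C (inl a) + C (inr (-(r * a))) * X) = 0 :=
    linear_mul_linear_eq_zero_iff.mpr
      ⟨by rw [← inl_mul, ha, inl_zero], by
        rw [inl_mul_inr, inr_mul_inl, ← inr_add, smul_eq_mul, op_smul_eq_mul, mul_neg,
          ← mul_assoc, neg_add_cancel, inr_zero],
        inr_mul_inr ..⟩
  obtain ⟨-, -, hcent, -⟩ := hT _ _ _ _ hprod
  rw [inr_mul_inl, mem_center_self_iff] at hcent
  have hc : a * r * a ∈ Set.center R := by simpa using hcent.2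
  refine hsp _ fun s => ?_
  rw [mul_assoc, ← (hc.comm s).eq, ← mul_assoc,
    show a * r * a * (a * r * a) = a * r * (a * a) * (r * a) by noncomm_ring, ha]
  simp

theorem isReduced_of_centralLinearArmendariz
    (hsp : ∀ a : R, (∀ r : R, a * r * a = 0) → a = 0)
    (hT : CentralLinearArmendariz (TrivSqZeroExt R R)) : IsReduced R :=
  (isReduced_iff_pow_one_lt 2 one_lt_two).mpr fun _ hx =>
    eq_zero_of_mul_self_eq_zero_of_centralLinearArmendariz hsp hT (by rwa [← sq])

end

/-- If `R` is central reduced, then the trivial extension `T(R,R)` is central linear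
Armendariz; conversely, if `R` is semiprime and `T(R,R)` is central linear Armendariz,
then `R` is central reduced. -/
theorem stmt_17 (R : Type*) [Ring R] :
    ((∀ a : R, IsNilpotent a → a ∈ Set.center R) →
      CentralLinearArmendariz (TrivSqZeroExt R R)) ∧
    ((∀ a : R, (∀ r : R, a * r * a = 0) → a = 0) →
      CentralLinearArmendariz (TrivSqZeroExt R R) →
      ∀ a : R, IsNilpotent a → a ∈ Set.center R) := by
  refine ⟨fun hR => ?_, fun hsp hT a ha => ?_⟩
  · exact (isCompletelySemiprime_nilpotentIdealOfCentral hR).centralLinearArmendariz_trivSqZeroExt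
      fun x hx => hR x (mem_nilpotentIdealOfCentral.mp hx)
  · have := isReduced_of_centralLinearArmendariz hsp hT
    rw [ha.eq_zero]
    exact Set.zero_mem_center
end

section
/- If R is a semiprime ring that is central reduced, then R is reduced. -/
theorem eq_zero_of_mem_center_of_sq_eq_zero {M : Type*} [MonoidWithZero M]
    (hsp : ∀ a : M, (∀ r : M, a * r * a = 0) → a = 0) {x : M} (hx : x ∈ Set.center M)
    (hx2 : x ^ 2 = 0) : x = 0 :=
  hsp x fun r => by rw [(Set.mem_center_iff.mp hx).comm r, mul_assoc, ← sq, hx2, mul_zero]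

/-- A semiprime, central reduced ring is reduced. -/
theorem stmt_18 (R : Type*) [Ring R]
    (hsp : ∀ a : R, (∀ r : R, a * r * a = 0) → a = 0)
    (hcr : ∀ a : R, IsNilpotent a → a ∈ Set.center R) :
    IsReduced R :=
  (isReduced_iff_pow_one_lt 2 one_lt_two).2 fun x hx =>
    eq_zero_of_mem_center_of_sq_eq_zero hsp (hcr x ⟨2, hx⟩) hx
end
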